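/- arXiv:2102.12535 — 4 statements merged into one kernel-verified Lean document; each statement's English description precedes it below -/
import Mathlib

section
/- For a random caterpillar with m ≥ 2 spine nodes after n steps, the expected Zagreb index equals n^2/m + (6m-5)n/m + 4m - 6. -/
/-! Write `Xᵢ` for the number of leaves on spine node `i` and `cᵢ ∈ {1, 2}` for the degree of `i`
in the spine path, so that `Z = ∑ᵢ (Xᵢ + cᵢ)² + n`. By linearity of expectation it suffices to
know `E[Xᵢ] = n/m`, `∑ᵢ cᵢ = 2m - 2`, `∑ᵢ cᵢ² = 4m - 6` and `E[∑ᵢ Xᵢ²] = n + n(n-1)/m`. The last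
holds because `∑ᵢ Xᵢ²` counts the ordered pairs of leaves attached to the same node, and two
distinct leaves collide with probability `1/m`. -/

open Finset Filter MeasureTheory

/-- Number of leaves attached to spine node `i` given attachment choices `ω`. -/
def leafCount {m n : ℕ} (ω : Fin n → Fin m) (i : Fin m) : ℕ :=
  (Finset.univ.filter (fun j => ω j = i)).card

/-- Degree of spine node `i` in the caterpillar: its leaf count plus 1 for an
end spine node, plus 2 for an interior spine node. -/
def degS {m n : ℕ} (ω : Fin n → Fin m) (i : Fin m) : ℕ :=
  leafCount ω i + (if i.val = 0 ∨ i.val = m - 1 then 1 else 2)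

/-- Zagreb index: sum of squared degrees of all nodes (each of the `n` leaves has degree 1). -/
def zagreb {m n : ℕ} (ω : Fin n → Fin m) : ℕ :=
  (∑ i, (degS ω i) ^ 2) + n

open Fintype

section FiberCounting

variable {α β : Type*} [Fintype α] [Fintype β]

theorem pow_card_sub_one_div_pow_card [Nonempty α] [Nonempty β] :
    (card β : ℝ) ^ (card α - 1) / card β ^ card α = 1 / card β := by
  rw [← pow_sub_one_mul card_ne_zero (card β : ℝ)]
  field_simp

variable [DecidableEq β]

theorem sum_sq_card_fiber (f : α → β) :
    ∑ b, #{a | f a = b} ^ 2 = #{p : α × α | f p.1 = f p.2} := by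
  rw [card_eq_sum_card_fiberwise (f := fun p => f p.1) (t := univ) (fun _ _ => mem_univ _)]
  refine sum_congr rfl fun b _ => ?_
  rw [sq, ← card_product]
  congr 1
  ext ⟨a, a'⟩
  simp only [mem_product, mem_filter, mem_univ, true_and]
  grind

variable [DecidableEq α]

theorem card_filter_apply_eq (a : α) (b : β) :
    #{f : α → β | f a = b} = card β ^ (card α - 1) := by
  simpa using card_filter_piFinset_const_eq_of_mem (univ : Finset β) a (mem_univ b)

def restrictComplEquiv {a a' : α} (h : a ≠ a') :
    {f : α → β // f a = f a'} ≃ ({x : α // x ≠ a'} → β) where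
  toFun f x := f.1 x
  invFun g := ⟨fun x => if hx : x = a' then g ⟨a, h⟩ else g ⟨x, hx⟩, by simp [h]⟩
  left_inv f := by
    ext x
    by_cases hx : x = a'
    · subst hx
      simp [f.2]
    · simp [hx]
  right_inv g := by
    ext x
    simp [x.2]

theorem card_filter_apply_eq_apply {a a' : α} (h : a ≠ a') :
    #{f : α → β | f a = f a'} = card β ^ (card α - 1) := by
  rw [← Fintype.card_subtype, Fintype.card_congr (restrictComplEquiv h), Fintype.card_fun,
    Fintype.card_subtype_compl, Fintype.card_subtype_eq]

theorem card_filter_apply_eq_div (a : α) (b : β) :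
    (#{f : α → β | f a = b} : ℝ) / card β ^ card α = 1 / card β := by
  have : Nonempty α := ⟨a⟩
  have : Nonempty β := ⟨b⟩
  rw [card_filter_apply_eq, Nat.cast_pow, pow_card_sub_one_div_pow_card]

theorem card_filter_apply_eq_apply_div [Nonempty β] (a a' : α) :
    (#{f : α → β | f a = f a'} : ℝ) / card β ^ card α = if a = a' then 1 else (1 : ℝ) / card β := by
  have : Nonempty α := ⟨a⟩
  split_ifs with h
  · simp [h]
  · rw [card_filter_apply_eq_apply h, Nat.cast_pow, pow_card_sub_one_div_pow_card]

theorem sum_card_fiber_div (b : β) :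
    (∑ f : α → β, (#{a | f a = b} : ℝ)) / card β ^ card α = card α / card β := by
  have hswap : ∑ f : α → β, #{a | f a = b} = ∑ a, #{f : α → β | f a = b} :=
    sum_card_bipartiteAbove_eq_sum_card_bipartiteBelow (fun (f : α → β) (a : α) => f a = b)
  rw [← Nat.cast_sum, hswap, Nat.cast_sum, sum_div]
  simp only [card_filter_apply_eq_div, sum_const, card_univ, nsmul_eq_mul]
  ring

theorem sum_sum_sq_card_fiber_div [Nonempty β] :
    (∑ f : α → β, ∑ b, (#{a | f a = b} : ℝ) ^ 2) / card β ^ card α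
      = card α + card α * (card α - 1) / card β := by
  have hsq (f : α → β) : ∑ b, (#{a | f a = b} : ℝ) ^ 2 = #{p : α × α | f p.1 = f p.2} := by
    exact_mod_cast sum_sq_card_fiber f
  have hswap : ∑ f : α → β, #{p : α × α | f p.1 = f p.2}
      = ∑ p : α × α, #{f : α → β | f p.1 = f p.2} :=
    sum_card_bipartiteAbove_eq_sum_card_bipartiteBelow
      (fun (f : α → β) (p : α × α) => f p.1 = f p.2)
  have hsplit (a a' : α) : (if a = a' then (1 : ℝ) else 1 / card β)
      = 1 / card β + if a = a' then 1 - (1 : ℝ) / card β else 0 := by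
    split_ifs <;> ring
  rw [Fintype.sum_congr _ _ hsq, ← Nat.cast_sum, hswap, Nat.cast_sum, sum_div]
  simp only [card_filter_apply_eq_apply_div, hsplit, sum_add_distrib, Fintype.sum_prod_type,
    Fintype.sum_ite_eq, sum_const, card_univ, Fintype.card_prod, nsmul_eq_mul]
  push_cast
  field_simp
  ring

end FiberCounting

section SpinePath

variable {m : ℕ}

def pathDegree (m : ℕ) (i : Fin m) : ℕ := if i.val = 0 ∨ i.val = m - 1 then 1 else 2

theorem card_filter_path_end (hm : 2 ≤ m) : #{i : Fin m | i.val = 0 ∨ i.val = m - 1} = 2 := by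
  have hends : ({i : Fin m | i.val = 0 ∨ i.val = m - 1} : Finset (Fin m))
      = {⟨0, by omega⟩, ⟨m - 1, by omega⟩} := by
    ext i
    simp [Fin.ext_iff]
  rw [hends, card_pair (by simp [Fin.ext_iff]; omega)]

theorem sum_ite_path_end (hm : 2 ≤ m) (x y : ℝ) :
    ∑ i : Fin m, (if i.val = 0 ∨ i.val = m - 1 then x else y) = 2 * x + (m - 2) * y := by
  have hcard := card_filter_add_card_filter_not (s := univ)
    (fun i : Fin m => i.val = 0 ∨ i.val = m - 1)
  rw [card_filter_path_end hm, card_univ, Fintype.card_fin] at hcard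
  rw [sum_ite, sum_const, sum_const, card_filter_path_end hm, nsmul_eq_mul, nsmul_eq_mul,
    show #{i : Fin m | ¬(i.val = 0 ∨ i.val = m - 1)} = m - 2 by omega, Nat.cast_sub hm]
  push_cast
  ring

theorem sum_pathDegree (hm : 2 ≤ m) : ∑ i, (pathDegree m i : ℝ) = 2 * m - 2 := by
  simp only [pathDegree, Nat.cast_ite, Nat.cast_one, Nat.cast_ofNat, sum_ite_path_end hm]
  ring

theorem sum_pathDegree_sq (hm : 2 ≤ m) : ∑ i, (pathDegree m i : ℝ) ^ 2 = 4 * m - 6 := by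
  simp only [pathDegree, Nat.cast_ite, Nat.cast_one, Nat.cast_ofNat, ite_pow,
    sum_ite_path_end hm]
  ring

end SpinePath

theorem cast_zagreb {m n : ℕ} (ω : Fin n → Fin m) :
    (zagreb ω : ℝ) = ∑ i, ((leafCount ω i : ℝ) ^ 2 + 2 * pathDegree m i * leafCount ω i
      + (pathDegree m i : ℝ) ^ 2) + n := by
  simp only [zagreb, degS, Nat.cast_add, Nat.cast_sum, Nat.cast_pow]
  congr 1
  refine sum_congr rfl fun i _ => ?_
  rw [pathDegree]
  ring

theorem sum_cast_zagreb (m n : ℕ) :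
    ∑ ω : Fin n → Fin m, (zagreb ω : ℝ)
      = ∑ ω : Fin n → Fin m, ∑ i, (leafCount ω i : ℝ) ^ 2
        + ∑ i, 2 * pathDegree m i * ∑ ω : Fin n → Fin m, (leafCount ω i : ℝ)
        + m ^ n * ∑ i, (pathDegree m i : ℝ) ^ 2 + m ^ n * n := by
  simp only [cast_zagreb, sum_add_distrib, sum_const, card_univ, Fintype.card_fun,
    Fintype.card_fin, nsmul_eq_mul]
  rw [sum_comm (f := fun ω i => 2 * (pathDegree m i : ℝ) * leafCount ω i)]
  simp only [mul_sum]
  push_cast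
  ring

/-- The expected Zagreb index of a random caterpillar with `m ≥ 2` spine nodes after
`n` steps equals `n²/m + (6m-5)n/m + 4m - 6`. -/
theorem expected_zagreb (m n : ℕ) (hm : 2 ≤ m) :
    (∑ ω : Fin n → Fin m, (zagreb ω : ℝ)) / (m : ℝ) ^ n
      = n ^ 2 / m + (6 * m - 5) * n / m + 4 * m - 6 := by
  have : Nonempty (Fin m) := ⟨⟨0, by omega⟩⟩
  have hpow : (m : ℝ) ^ n ≠ 0 := by positivity
  have hmean (i : Fin m) : ∑ ω : Fin n → Fin m, (leafCount ω i : ℝ) = n / m * m ^ n := by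
    rw [← div_eq_iff hpow]
    simpa only [leafCount, Fintype.card_fin] using sum_card_fiber_div (α := Fin n) i
  have hsq : ∑ ω : Fin n → Fin m, ∑ i, (leafCount ω i : ℝ) ^ 2
      = (n + n * (n - 1) / m) * m ^ n := by
    rw [← div_eq_iff hpow]
    simpa only [leafCount, Fintype.card_fin] using
      sum_sum_sq_card_fiber_div (α := Fin n) (β := Fin m)
  rw [sum_cast_zagreb, hsq, Fintype.sum_congr _ _ fun i => by rw [hmean i],
    sum_pathDegree_sq hm]
  simp only [← sum_mul, ← mul_sum, sum_pathDegree hm]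
  field_simp
  ring
end

section
/- For a random caterpillar with m ≥ 2 spine nodes, the process M_n = Z_n - n(n+6m-5)/m is a martingale with respect to the natural filtration of the attachment process. -/
open Finset Filter MeasureTheory

lemma leafCount_snoc {m n : ℕ} (h : Fin n → Fin m) (c i : Fin m) :
    leafCount (Fin.snoc h c) i = leafCount h i + if c = i then 1 else 0 := by
  simp only [leafCount, Finset.card_filter, Fin.sum_univ_castSucc,
    Fin.snoc_castSucc, Fin.snoc_last]

lemma degS_snoc {m n : ℕ} (h : Fin n → Fin m) (c i : Fin m) :
    degS (Fin.snoc h c) i = degS h i + if c = i then 1 else 0 := by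
  simp only [degS, leafCount_snoc]; ring

lemma sum_leafCount {m n : ℕ} (h : Fin n → Fin m) :
    ∑ i, leafCount h i = n := by
  simp only [leafCount]
  rw [← Finset.card_eq_sum_card_fiberwise (fun x _ => Finset.mem_univ (h x))]
  simp

lemma sum_degS {m n : ℕ} (hm : 2 ≤ m) (h : Fin n → Fin m) :
    (∑ i, degS h i) + 2 = n + 2 * m := by
  have hfil : Finset.univ.filter (fun i : Fin m => i.val = 0 ∨ i.val = m - 1)
      = {⟨0, by omega⟩, ⟨m - 1, by omega⟩} := by
    ext i
    simp [Fin.ext_iff]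
  have hcard : (Finset.univ.filter
      (fun i : Fin m => i.val = 0 ∨ i.val = m - 1)).card = 2 := by
    rw [hfil]
    rw [Finset.card_insert_of_notMem (by simp [Fin.ext_iff]; omega), Finset.card_singleton]
  have key : (∑ i : Fin m, (if i.val = 0 ∨ i.val = m - 1 then 1 else 2))
      + (∑ i : Fin m, (if i.val = 0 ∨ i.val = m - 1 then 1 else 0)) = 2 * m := by
    rw [← Finset.sum_add_distrib]
    have : ∀ i : Fin m, ((if i.val = 0 ∨ i.val = m - 1 then 1 else 2)
        + (if i.val = 0 ∨ i.val = m - 1 then 1 else 0)) = 2 := by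
      intro i; split_ifs <;> ring
    simp [this, Finset.sum_const, mul_comm]
  rw [← Finset.card_filter] at key
  rw [hcard] at key
  simp only [degS, Finset.sum_add_distrib, sum_leafCount]
  omega

lemma sum_zagreb_snoc {m n : ℕ} (hm : 2 ≤ m) (h : Fin n → Fin m) :
    (∑ c : Fin m, zagreb (Fin.snoc h c)) + 4 = m * zagreb h + 2 * n + 6 * m := by
  have hsq : ∀ c : Fin m, ∑ i, (degS (Fin.snoc h c) i) ^ 2
      = (∑ i, (degS h i) ^ 2) + 2 * degS h c + 1 := by
    intro c
    have : ∀ i : Fin m, (degS (Fin.snoc h c) i) ^ 2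
        = (degS h i) ^ 2 + (if c = i then 2 * degS h i + 1 else 0) := by
      intro i; rw [degS_snoc]; split_ifs <;> ring
    rw [Finset.sum_congr rfl (fun i _ => this i), Finset.sum_add_distrib,
      Finset.sum_ite_eq univ c (fun i => 2 * degS h i + 1)]
    simp only [Finset.mem_univ, if_true]
    ring
  have hd := sum_degS hm h
  simp only [zagreb, hsq]
  simp only [Finset.sum_add_distrib, Finset.sum_const, Finset.card_univ,
    Fintype.card_fin, smul_eq_mul, mul_one, ← Finset.mul_sum]
  nlinarith [hd]

/-- `M_n = Z_n - n(n+6m-5)/m` is a martingale with respect to the natural filtration of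
the attachment process: conditioning on any history `h` of the first `n` choices and
averaging over the next uniform choice leaves `M` unchanged. -/
theorem zagreb_martingale (m : ℕ) (hm : 2 ≤ m)
    (M : ∀ {k : ℕ}, (Fin k → Fin m) → ℝ)
    (hM : ∀ {k : ℕ} (ω : Fin k → Fin m),
      M ω = (zagreb ω : ℝ) - k * (k + 6 * m - 5) / m) :
    ∀ (n : ℕ) (h : Fin n → Fin m),
      (∑ c : Fin m, M (Fin.snoc h c)) / m = M h := by
  intro n h
  have hm0 : (m : ℝ) ≠ 0 := by positivity
  have hS : (∑ c : Fin m, (zagreb (Fin.snoc h c) : ℝ))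
      = m * zagreb h + 2 * n + 6 * m - 4 := by
    have := sum_zagreb_snoc hm h
    have hc : ((∑ c : Fin m, zagreb (Fin.snoc h c)) + 4 : ℝ)
        = m * zagreb h + 2 * n + 6 * m := by exact_mod_cast congrArg (Nat.cast : ℕ → ℝ) this
    push_cast at hc ⊢
    linarith
  simp only [hM]
  rw [Finset.sum_sub_distrib, Finset.sum_const, Finset.card_univ, Fintype.card_fin, hS]
  push_cast
  rw [nsmul_eq_mul]
  field_simp
  ring
end

section
/- For a random caterpillar with m ≥ 2 spine nodes, Z_n/n^2 converges to 1/m in L^2 as n → ∞. -/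
open Finset Filter MeasureTheory

lemma sum_prod_eval {n m : ℕ} (f : Fin n → Fin m → ℝ) :
    ∑ ω : Fin n → Fin m, ∏ j, f j (ω j) = ∏ j, ∑ x, f j x :=
  (Fintype.prod_sum f).symm

lemma prod_ite_single {n : ℕ} (j : Fin n) (S M : ℝ) :
    (∏ j' : Fin n, (if j' = j then S else M)) = S * M ^ (n - 1) := by
  rw [← Finset.mul_prod_erase _ _ (Finset.mem_univ j), if_pos rfl]
  congr 1
  rw [Finset.prod_congr rfl (fun x hx => if_neg (Finset.ne_of_mem_erase hx)),
    Finset.prod_const, Finset.card_erase_of_mem (Finset.mem_univ j),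
    Finset.card_univ, Fintype.card_fin]

lemma sum_single {n m : ℕ} (j : Fin n) (g : Fin m → ℝ) :
    (m : ℝ) * ∑ ω : Fin n → Fin m, g (ω j) = (m : ℝ) ^ n * ∑ x, g x := by
  have h1 : ∀ ω : Fin n → Fin m, g (ω j) = ∏ j', (if j' = j then g (ω j') else 1) := by
    intro ω
    rw [Finset.prod_ite_eq' univ j (fun j' => g (ω j'))]
    simp
  calc (m : ℝ) * ∑ ω : Fin n → Fin m, g (ω j)
      = (m : ℝ) * ∑ ω : Fin n → Fin m, ∏ j', (if j' = j then g (ω j') else 1) := by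
        congr 1; exact Finset.sum_congr rfl fun ω _ => h1 ω
    _ = (m : ℝ) * ∏ j', ∑ x, (if j' = j then g x else 1) := by
        rw [sum_prod_eval (fun j' x => if j' = j then g x else 1)]
    _ = (m : ℝ) * ∏ j' : Fin n, (if j' = j then ∑ x, g x else (m : ℝ)) := by
        congr 1; refine Finset.prod_congr rfl fun j' _ => ?_
        split <;> simp
    _ = (m : ℝ) * ((∑ x, g x) * (m : ℝ) ^ (n - 1)) := by rw [prod_ite_single]
    _ = (m : ℝ) ^ n * ∑ x, g x := by
        have hn : 1 ≤ n := j.pos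
        have hp : (m : ℝ) ^ n = (m : ℝ) ^ (n - 1) * m := by
          rw [← pow_succ]; congr 1; omega
        rw [hp]; ring

lemma prod_ite_pair {n : ℕ} {j k : Fin n} (hjk : j ≠ k) (S T M : ℝ) :
    (∏ j' : Fin n, (if j' = j then S else if j' = k then T else M)) =
      S * T * M ^ (n - 2) := by
  rw [← Finset.mul_prod_erase _ _ (Finset.mem_univ j), if_pos rfl]
  have hk : k ∈ Finset.univ.erase j := Finset.mem_erase.2 ⟨hjk.symm, Finset.mem_univ k⟩
  rw [← Finset.mul_prod_erase _ _ hk, if_neg hjk.symm, if_pos rfl]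
  have : ∀ x ∈ (Finset.univ.erase j).erase k,
      (if x = j then S else if x = k then T else M) = M := by
    intro x hx
    rw [if_neg (Finset.ne_of_mem_erase (Finset.mem_of_mem_erase hx)),
      if_neg (Finset.ne_of_mem_erase hx)]
  rw [Finset.prod_congr rfl this, Finset.prod_const,
    Finset.card_erase_of_mem hk, Finset.card_erase_of_mem (Finset.mem_univ j),
    Finset.card_univ, Fintype.card_fin]
  rw [show n - 1 - 1 = n - 2 by omega]
  ring

lemma sum_pair {n m : ℕ} {j k : Fin n} (hjk : j ≠ k) (g h : Fin m → ℝ) :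
    (m : ℝ) ^ 2 * ∑ ω : Fin n → Fin m, g (ω j) * h (ω k) =
      (m : ℝ) ^ n * ((∑ x, g x) * (∑ x, h x)) := by
  have h1 : ∀ ω : Fin n → Fin m,
      g (ω j) * h (ω k) = ∏ j', (if j' = j then g (ω j') else if j' = k then h (ω j') else 1) := by
    intro ω
    have e : ∀ j' : Fin n,
        (if j' = j then g (ω j') else if j' = k then h (ω j') else (1:ℝ)) =
        (if j' = j then g (ω j) else if j' = k then h (ω k) else (1:ℝ)) := by
      intro j'
      split_ifs with h1 h2
      · rw [h1]
      · rw [h2]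
      · rfl
    rw [Finset.prod_congr rfl (fun j' _ => e j'), prod_ite_pair hjk]
    simp
  calc (m : ℝ) ^ 2 * ∑ ω : Fin n → Fin m, g (ω j) * h (ω k)
      = (m : ℝ) ^ 2 * ∑ ω : Fin n → Fin m,
          ∏ j', (if j' = j then g (ω j') else if j' = k then h (ω j') else 1) := by
        congr 1; exact Finset.sum_congr rfl fun ω _ => h1 ω
    _ = (m : ℝ) ^ 2 * ∏ j', ∑ x, (if j' = j then g x else if j' = k then h x else 1) := by
        rw [sum_prod_eval (fun j' x => if j' = j then g x else if j' = k then h x else 1)]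
    _ = (m : ℝ) ^ 2 * ∏ j' : Fin n,
          (if j' = j then ∑ x, g x else if j' = k then ∑ x, h x else (m : ℝ)) := by
        congr 1; refine Finset.prod_congr rfl fun j' _ => ?_
        split
        · rfl
        · split <;> simp
    _ = (m : ℝ) ^ 2 * ((∑ x, g x) * (∑ x, h x) * (m : ℝ) ^ (n - 2)) := by
        rw [prod_ite_pair hjk]
    _ = (m : ℝ) ^ n * ((∑ x, g x) * (∑ x, h x)) := by
        have hn : 2 ≤ n := by
          have := j.isLt; have := k.isLt
          have : j.val ≠ k.val := fun hv => hjk (Fin.ext hv)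
          omega
        have hp : (m : ℝ) ^ n = (m : ℝ) ^ (n - 2) * m ^ 2 := by
          rw [← pow_add]; congr 1; omega
        rw [hp]; ring

lemma leafCount_cast {m n : ℕ} (ω : Fin n → Fin m) (i : Fin m) :
    (leafCount ω i : ℝ) = ∑ j, (if ω j = i then (1:ℝ) else 0) := by
  rw [leafCount, Finset.card_filter]
  push_cast
  exact Finset.sum_congr rfl fun j _ => by split <;> simp

lemma moment1 {m n : ℕ} (i : Fin m) :
    (m : ℝ) * ∑ ω : Fin n → Fin m, (leafCount ω i : ℝ) = n * (m : ℝ) ^ n := by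
  calc (m : ℝ) * ∑ ω : Fin n → Fin m, (leafCount ω i : ℝ)
      = ∑ j : Fin n, (m : ℝ) * ∑ ω : Fin n → Fin m, (if ω j = i then (1:ℝ) else 0) := by
        rw [Finset.sum_congr rfl fun ω (_ : ω ∈ univ) => leafCount_cast ω i, Finset.sum_comm,
          Finset.mul_sum]
    _ = ∑ j : Fin n, (m : ℝ) ^ n * ∑ x : Fin m, (if x = i then (1:ℝ) else 0) := by
        exact Finset.sum_congr rfl fun j _ => sum_single j (fun x => if x = i then (1:ℝ) else 0)
    _ = n * (m : ℝ) ^ n := by simp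

lemma moment2 {m n : ℕ} (i : Fin m) :
    (m : ℝ) ^ 2 * ∑ ω : Fin n → Fin m, (leafCount ω i : ℝ) ^ 2 =
      n * (m : ℝ) ^ (n + 1) + n * ((n : ℝ) - 1) * (m : ℝ) ^ n := by
  have hrw : ∀ ω : Fin n → Fin m, (leafCount ω i : ℝ) ^ 2 =
      ∑ j : Fin n, ∑ k : Fin n,
        (if ω j = i then (1:ℝ) else 0) * (if ω k = i then (1:ℝ) else 0) := by
    intro ω
    rw [leafCount_cast ω i, sq, Finset.sum_mul_sum]
  calc (m : ℝ) ^ 2 * ∑ ω : Fin n → Fin m, (leafCount ω i : ℝ) ^ 2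
      = ∑ j : Fin n, ∑ k : Fin n, (m : ℝ) ^ 2 * ∑ ω : Fin n → Fin m,
          (if ω j = i then (1:ℝ) else 0) * (if ω k = i then (1:ℝ) else 0) := by
        rw [Finset.sum_congr rfl fun ω (_ : ω ∈ univ) => hrw ω, Finset.sum_comm, Finset.mul_sum]
        refine Finset.sum_congr rfl fun j _ => ?_
        rw [Finset.sum_comm, Finset.mul_sum]
    _ = ∑ j : Fin n, ((m : ℝ) ^ (n + 1) + ((n : ℝ) - 1) * (m : ℝ) ^ n) := by
        refine Finset.sum_congr rfl fun j _ => ?_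
        rw [← Finset.add_sum_erase _ _ (Finset.mem_univ j)]
        have hdiag : (m : ℝ) ^ 2 * ∑ ω : Fin n → Fin m,
            (if ω j = i then (1:ℝ) else 0) * (if ω j = i then (1:ℝ) else 0) =
            (m : ℝ) ^ (n + 1) := by
          have : ∀ ω : Fin n → Fin m,
              (if ω j = i then (1:ℝ) else 0) * (if ω j = i then (1:ℝ) else 0) =
              (if ω j = i then (1:ℝ) else 0) := by intro ω; split <;> simp
          rw [Finset.sum_congr rfl fun ω _ => this ω, sq, mul_assoc,
            sum_single j (fun x => if x = i then (1:ℝ) else 0)]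
          simp [pow_succ, mul_comm]
        have hoff : ∀ k ∈ Finset.univ.erase j, (m : ℝ) ^ 2 * ∑ ω : Fin n → Fin m,
            (if ω j = i then (1:ℝ) else 0) * (if ω k = i then (1:ℝ) else 0) =
            (m : ℝ) ^ n := by
          intro k hk
          have hjk : j ≠ k := (Finset.ne_of_mem_erase hk).symm
          rw [sum_pair hjk (fun x => if x = i then (1:ℝ) else 0)
            (fun x => if x = i then (1:ℝ) else 0)]
          simp
        rw [hdiag, Finset.sum_congr rfl hoff, Finset.sum_const,
          Finset.card_erase_of_mem (Finset.mem_univ j), Finset.card_univ, Fintype.card_fin]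
        have hn : 1 ≤ n := j.pos
        have : ((n - 1 : ℕ) : ℝ) = (n : ℝ) - 1 := by
          push_cast [Nat.cast_sub hn]; ring
        rw [nsmul_eq_mul, this]
    _ = n * (m : ℝ) ^ (n + 1) + n * ((n : ℝ) - 1) * (m : ℝ) ^ n := by
        rw [Finset.sum_const, Finset.card_univ, Fintype.card_fin, nsmul_eq_mul]; ring

lemma var_le {m n : ℕ} (hm : 2 ≤ m) (i : Fin m) :
    ∑ ω : Fin n → Fin m, ((leafCount ω i : ℝ) - n / m) ^ 2 ≤ n * (m : ℝ) ^ n := by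
  have hmpos : (0:ℝ) < m := by
    have : (0:ℕ) < m := by omega
    exact_mod_cast this
  have hm0 : (m:ℝ) ≠ 0 := ne_of_gt hmpos
  have hcard : ∑ _ω : Fin n → Fin m, (1:ℝ) = (m : ℝ) ^ n := by
    rw [Finset.sum_const, Finset.card_univ, nsmul_eq_mul, mul_one]
    rw [Fintype.card_fun, Fintype.card_fin, Fintype.card_fin]
    push_cast; rfl
  have key : ∑ ω : Fin n → Fin m, ((m:ℝ) * (leafCount ω i) - n) ^ 2 =
      n * (m : ℝ) ^ (n + 1) - n * (m : ℝ) ^ n := by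
    have e : ∑ ω : Fin n → Fin m, ((m:ℝ) * (leafCount ω i) - n) ^ 2 =
        (m:ℝ) ^ 2 * (∑ ω : Fin n → Fin m, (leafCount ω i : ℝ) ^ 2)
          - 2 * n * ((m:ℝ) * ∑ ω : Fin n → Fin m, (leafCount ω i : ℝ))
          + n ^ 2 * (∑ _ω : Fin n → Fin m, (1:ℝ)) := by
      rw [Finset.mul_sum, Finset.mul_sum, Finset.mul_sum, Finset.mul_sum,
        ← Finset.sum_sub_distrib, ← Finset.sum_add_distrib]
      exact Finset.sum_congr rfl fun ω _ => by ring
    rw [e, moment2 i, moment1 i, hcard]; ring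
  have hrw : ∀ ω : Fin n → Fin m,
      ((leafCount ω i : ℝ) - n / m) ^ 2 = ((m:ℝ) * (leafCount ω i) - n) ^ 2 / (m:ℝ) ^ 2 := by
    intro ω; field_simp
  rw [Finset.sum_congr rfl fun ω _ => hrw ω, ← Finset.sum_div, key]
  rw [div_le_iff₀ (by positivity)]
  have h1 : (m:ℝ) ^ (n + 1) ≤ (m:ℝ) ^ (n + 2) :=
    pow_le_pow_right₀ (by exact_mod_cast Nat.one_le_of_lt hm) (by omega)
  have h2 : (0:ℝ) ≤ (n:ℝ) * (m:ℝ) ^ n := by positivity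
  have h3 : (0:ℝ) ≤ (n:ℝ) := Nat.cast_nonneg n
  have h4 : (n:ℝ) * (m:ℝ) ^ n * (m:ℝ) ^ 2 = (n:ℝ) * (m:ℝ) ^ (n + 2) := by
    rw [mul_assoc, ← pow_add]
  linarith [mul_le_mul_of_nonneg_left h1 h3, h2]

lemma sum_leafCount_eq {m n : ℕ} (ω : Fin n → Fin m) :
    ∑ i, (leafCount ω i : ℝ) = n := by
  have h : ∑ i : Fin m, leafCount ω i = n := by
    simp only [leafCount]
    rw [← Finset.card_eq_sum_card_fiberwise (fun x (_ : x ∈ Finset.univ) => Finset.mem_univ (ω x))]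
    simp
  exact_mod_cast h

set_option maxHeartbeats 1000000 in
lemma pointwise_bound {m n : ℕ} (hm : 2 ≤ m) (hn : 1 ≤ n) (ω : Fin n → Fin m) :
    ((zagreb ω : ℝ) / (n : ℝ) ^ 2 - 1 / m) ^ 2 ≤
      8 * (m : ℝ) * ∑ i, ((leafCount ω i : ℝ) / n - 1 / m) ^ 2
        + 2 * ((5 + 4 * (m : ℝ)) / n) ^ 2 := by
  have hmpos : (0:ℝ) < m := by exact_mod_cast (by omega : 0 < m)
  have hnpos : (0:ℝ) < n := by exact_mod_cast (by omega : 0 < n)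
  have hm1 : (1:ℝ) ≤ m := by exact_mod_cast (by omega : 1 ≤ m)
  have hn1 : (1:ℝ) ≤ n := by exact_mod_cast hn
  set L : Fin m → ℝ := fun i => (leafCount ω i : ℝ) with hLdef
  set c : Fin m → ℝ := fun i => (degS ω i : ℝ) - L i with hcdef
  have hdeg : ∀ i, (degS ω i : ℝ) = L i + c i := fun i => by simp [hcdef]
  have hc12 : ∀ i, 1 ≤ c i ∧ c i ≤ 2 := by
    intro i
    have : (degS ω i : ℝ) = L i + ((if i.val = 0 ∨ i.val = m - 1 then 1 else 2 : ℕ) : ℝ) := by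
      rw [degS]; push_cast; simp [hLdef, leafCount]
    rw [hcdef]
    simp only [this]
    split <;> norm_num
  have hLnn : ∀ i, 0 ≤ L i := fun i => Nat.cast_nonneg _
  have hsum : ∑ i, L i = n := sum_leafCount_eq ω
  have hLle : ∀ i, L i ≤ n := by
    intro i
    calc L i ≤ ∑ i', L i' := Finset.single_le_sum (fun i' _ => hLnn i') (Finset.mem_univ i)
      _ = n := hsum
  have hz : (zagreb ω : ℝ) = ∑ i, (L i + c i) ^ 2 + n := by
    rw [zagreb]
    push_cast
    congr 1
    exact Finset.sum_congr rfl fun i _ => by rw [hdeg i]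
  set A : ℝ := ∑ i, ((L i / n) ^ 2 - 1 / (m:ℝ) ^ 2) with hAdef
  set B : ℝ := (∑ i, (2 * c i * L i + c i ^ 2)) / (n:ℝ) ^ 2 + 1 / n with hBdef
  have hAB : (zagreb ω : ℝ) / (n:ℝ) ^ 2 - 1 / m = A + B := by
    have expand : ∑ i, (L i + c i) ^ 2 =
        ∑ i, (L i) ^ 2 + ∑ i, (2 * c i * L i + c i ^ 2) := by
      rw [← Finset.sum_add_distrib]
      exact Finset.sum_congr rfl fun i _ => by ring
    have e1 : ∑ i, (L i / n) ^ 2 = (∑ i, (L i) ^ 2) / (n:ℝ) ^ 2 := by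
      rw [Finset.sum_div]
      exact Finset.sum_congr rfl fun i _ => div_pow _ _ _
    have hm' : ∑ _i : Fin m, (1 / (m:ℝ) ^ 2) = 1 / (m:ℝ) := by
      rw [Finset.sum_const, Finset.card_univ, Fintype.card_fin, nsmul_eq_mul]
      field_simp
    have hn0 : (n:ℝ) ≠ 0 := ne_of_gt hnpos
    have hm0 : (m:ℝ) ≠ 0 := ne_of_gt hmpos
    have halg : ∀ a b : ℝ, (a + b + (n:ℝ)) / (n:ℝ) ^ 2 - 1 / (m:ℝ) =
        (a / (n:ℝ) ^ 2 - 1 / (m:ℝ)) + (b / (n:ℝ) ^ 2 + 1 / (n:ℝ)) := by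
      intro a b; field_simp; ring
    rw [hz, hAdef, Finset.sum_sub_distrib, e1, hm', expand, hBdef]
    exact halg _ _
  have hBnn : 0 ≤ B := by
    have h1 : 0 ≤ ∑ i, (2 * c i * L i + c i ^ 2) := by
      refine Finset.sum_nonneg fun i _ => ?_
      have := (hc12 i).1
      nlinarith [hLnn i]
    rw [hBdef]
    positivity
  have hBle : B ≤ (5 + 4 * m) / n := by
    have h1 : ∑ i, (2 * c i * L i + c i ^ 2) ≤ 4 * (n:ℝ) + 4 * m := by
      calc ∑ i, (2 * c i * L i + c i ^ 2) ≤ ∑ i, (4 * L i + 4) := by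
            refine Finset.sum_le_sum fun i _ => ?_
            have h2 := (hc12 i).1
            have h3 := (hc12 i).2
            nlinarith [hLnn i]
        _ = 4 * (n:ℝ) + 4 * m := by
            rw [Finset.sum_add_distrib, ← Finset.mul_sum, hsum, Finset.sum_const,
              Finset.card_univ, Fintype.card_fin, nsmul_eq_mul]
            ring
    have h2 : (4 * (n:ℝ) + 4 * m) / (n:ℝ) ^ 2 ≤ (4 + 4 * m) / n := by
      rw [div_le_div_iff₀ (by positivity) hnpos]
      nlinarith [mul_nonneg (mul_nonneg hmpos.le hnpos.le) (sub_nonneg.2 hn1)]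
    have h3 : (∑ i, (2 * c i * L i + c i ^ 2)) / (n:ℝ) ^ 2 ≤ (4 * (n:ℝ) + 4 * m) / (n:ℝ) ^ 2 :=
      div_le_div_of_nonneg_right h1 (by positivity) |>.trans_eq rfl
    have h4 : (4 + 4 * (m:ℝ)) / n + 1 / n = (5 + 4 * m) / n := by
      rw [← add_div]; ring_nf
    rw [hBdef, ← h4]
    have := h3.trans h2
    linarith
  have hAbs : |A| ≤ 2 * ∑ i, |L i / n - 1 / m| := by
    have hA : A = ∑ i, (L i / n - 1 / m) * (L i / n + 1 / m) := by
      rw [hAdef]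
      exact Finset.sum_congr rfl fun i _ => by ring
    rw [hA, two_mul, ← Finset.sum_add_distrib]
    refine (Finset.abs_sum_le_sum_abs _ _).trans (Finset.sum_le_sum fun i _ => ?_)
    rw [abs_mul]
    have h1 : |L i / n + 1 / m| ≤ 2 := by
      rw [abs_of_nonneg (by positivity)]
      have h2 : L i / n ≤ 1 := (div_le_one hnpos).2 (hLle i)
      have h3 : 1 / (m:ℝ) ≤ 1 := by rw [div_le_one hmpos]; exact hm1
      linarith
    nlinarith [abs_nonneg (L i / n - 1 / m)]
  have hA2 : A ^ 2 ≤ 4 * (m:ℝ) * ∑ i, (L i / n - 1 / m) ^ 2 := by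
    have h1 : A ^ 2 ≤ (2 * ∑ i, |L i / n - 1 / m|) ^ 2 := by
      rw [← sq_abs A]
      exact pow_le_pow_left₀ (abs_nonneg A) hAbs 2
    have h2 : (∑ i, |L i / n - 1 / m|) ^ 2 ≤ (m:ℝ) * ∑ i, |L i / n - 1 / m| ^ 2 := by
      have := sq_sum_le_card_mul_sum_sq (s := (Finset.univ : Finset (Fin m)))
        (f := fun i => |L i / n - 1 / m|)
      simpa [Finset.card_univ] using this
    have h3 : ∑ i, |L i / n - 1 / m| ^ 2 = ∑ i, (L i / n - 1 / m) ^ 2 :=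
      Finset.sum_congr rfl fun i _ => sq_abs _
    rw [h3] at h2
    nlinarith
  have hB2 : B ^ 2 ≤ ((5 + 4 * (m:ℝ)) / n) ^ 2 := pow_le_pow_left₀ hBnn hBle 2
  rw [hAB]
  show (A + B) ^ 2 ≤ 8 * (m:ℝ) * ∑ i, (L i / (n:ℝ) - 1 / (m:ℝ)) ^ 2
    + 2 * ((5 + 4 * (m:ℝ)) / (n:ℝ)) ^ 2
  have h5 : (A + B) ^ 2 ≤ 2 * A ^ 2 + 2 * B ^ 2 := by nlinarith [sq_nonneg (A - B)]
  have h6 : 2 * A ^ 2 + 2 * B ^ 2 ≤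
      8 * (m:ℝ) * ∑ i, (L i / (n:ℝ) - 1 / (m:ℝ)) ^ 2 + 2 * ((5 + 4 * (m:ℝ)) / (n:ℝ)) ^ 2 := by
    linarith [hA2, hB2]
  exact h5.trans h6

lemma per_i_bound {m n : ℕ} (hm : 2 ≤ m) (hn : 1 ≤ n) (i : Fin m) :
    ∑ ω : Fin n → Fin m, ((leafCount ω i : ℝ) / n - 1 / m) ^ 2 ≤ (m:ℝ) ^ n / n := by
  have hmpos : (0:ℝ) < m := by exact_mod_cast (by omega : 0 < m)
  have hnpos : (0:ℝ) < n := by exact_mod_cast (by omega : 0 < n)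
  have hn0 : (n:ℝ) ≠ 0 := ne_of_gt hnpos
  have hm0 : (m:ℝ) ≠ 0 := ne_of_gt hmpos
  have h1 : ∀ ω : Fin n → Fin m,
      ((leafCount ω i : ℝ) / n - 1 / m) ^ 2 = ((leafCount ω i : ℝ) - n / m) ^ 2 / (n:ℝ) ^ 2 := by
    intro ω
    have e : (leafCount ω i : ℝ) / n - 1 / m = ((leafCount ω i : ℝ) - n / m) / n := by
      field_simp
    rw [e, div_pow]
  rw [Finset.sum_congr rfl fun ω _ => h1 ω, ← Finset.sum_div]
  have h2 := var_le (n := n) hm i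
  calc (∑ ω : Fin n → Fin m, ((leafCount ω i : ℝ) - n / m) ^ 2) / (n:ℝ) ^ 2
      ≤ ((n:ℝ) * (m:ℝ) ^ n) / (n:ℝ) ^ 2 := by
        exact div_le_div_of_nonneg_right h2 (by positivity) |>.trans_eq rfl
    _ = (m:ℝ) ^ n / n := by field_simp

/-- `Z_n / n²` converges to `1/m` in `L²` as `n → ∞`. -/
theorem zagreb_L2_convergence (m : ℕ) (hm : 2 ≤ m) :
    Tendsto (fun n : ℕ =>
        (∑ ω : Fin n → Fin m, ((zagreb ω : ℝ) / (n : ℝ) ^ 2 - 1 / m) ^ 2) / (m : ℝ) ^ n)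
      atTop (nhds 0) := by
  have hmpos : (0:ℝ) < m := by exact_mod_cast (by omega : 0 < m)
  set K : ℝ := 8 * (m:ℝ) ^ 2 + 2 * (5 + 4 * (m:ℝ)) ^ 2 with hK
  refine squeeze_zero' ?_ ?_ (tendsto_const_div_atTop_nhds_zero_nat K)
  · filter_upwards with n
    positivity
  · filter_upwards [Filter.eventually_ge_atTop 1] with n hn
    have hnpos : (0:ℝ) < n := by exact_mod_cast (by omega : 0 < n)
    have hmn : (0:ℝ) < (m:ℝ) ^ n := by positivity
    rw [div_le_iff₀ hmn]
    have hcard : ∑ _ω : Fin n → Fin m, (1:ℝ) = (m : ℝ) ^ n := by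
      rw [Finset.sum_const, Finset.card_univ, nsmul_eq_mul, mul_one]
      rw [Fintype.card_fun, Fintype.card_fin, Fintype.card_fin]
      push_cast; rfl
    calc ∑ ω : Fin n → Fin m, ((zagreb ω : ℝ) / (n : ℝ) ^ 2 - 1 / m) ^ 2
        ≤ ∑ ω : Fin n → Fin m,
            (8 * (m : ℝ) * ∑ i, ((leafCount ω i : ℝ) / n - 1 / m) ^ 2
              + 2 * ((5 + 4 * (m : ℝ)) / n) ^ 2) :=
          Finset.sum_le_sum fun ω _ => pointwise_bound hm hn ω
      _ = 8 * (m : ℝ) * ∑ i : Fin m, ∑ ω : Fin n → Fin m,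
            ((leafCount ω i : ℝ) / n - 1 / m) ^ 2
            + (m:ℝ) ^ n * (2 * ((5 + 4 * (m : ℝ)) / n) ^ 2) := by
          have hcard2 : ((Fintype.card (Fin n → Fin m) : ℕ) : ℝ) = (m:ℝ) ^ n := by
            rw [Fintype.card_fun, Fintype.card_fin, Fintype.card_fin]
            push_cast; rfl
          rw [Finset.sum_add_distrib, ← Finset.mul_sum, Finset.sum_comm,
            Finset.sum_const, Finset.card_univ, nsmul_eq_mul, hcard2]
      _ ≤ 8 * (m : ℝ) * ∑ _i : Fin m, ((m:ℝ) ^ n / n)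
            + (m:ℝ) ^ n * (2 * ((5 + 4 * (m : ℝ)) / n) ^ 2) := by
          have h3 : (0:ℝ) ≤ 8 * (m:ℝ) := by positivity
          have h4 := Finset.sum_le_sum fun i (_ : i ∈ Finset.univ) => per_i_bound hm hn i
          nlinarith [h4]
      _ = 8 * (m : ℝ) ^ 2 * ((m:ℝ) ^ n / n)
            + (m:ℝ) ^ n * (2 * ((5 + 4 * (m : ℝ)) / n) ^ 2) := by
          rw [Finset.sum_const, Finset.card_univ, Fintype.card_fin, nsmul_eq_mul]
          ring
      _ ≤ K / n * (m:ℝ) ^ n := by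
          have hn0 : (n:ℝ) ≠ 0 := ne_of_gt hnpos
          have hn1 : (1:ℝ) ≤ n := by exact_mod_cast hn
          rw [hK]
          have e1 : (8 * (m : ℝ) ^ 2 * ((m:ℝ) ^ n / n)
              + (m:ℝ) ^ n * (2 * ((5 + 4 * (m : ℝ)) / n) ^ 2)) * (n:ℝ) ^ 2 =
              8 * (m : ℝ) ^ 2 * (m:ℝ) ^ n * n + 2 * (5 + 4 * (m:ℝ)) ^ 2 * (m:ℝ) ^ n := by
            field_simp
          have e2 : ((8 * (m:ℝ) ^ 2 + 2 * (5 + 4 * (m:ℝ)) ^ 2) / n * (m:ℝ) ^ n) * (n:ℝ) ^ 2 =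
              8 * (m : ℝ) ^ 2 * (m:ℝ) ^ n * n + 2 * (5 + 4 * (m:ℝ)) ^ 2 * (m:ℝ) ^ n * n := by
            field_simp
          have h5 : (0:ℝ) ≤ 2 * (5 + 4 * (m:ℝ)) ^ 2 * (m:ℝ) ^ n := by positivity
          have hsq : (0:ℝ) < (n:ℝ) ^ 2 := by positivity
          rw [← mul_le_mul_iff_of_pos_right hsq, e1, e2]
          nlinarith [mul_nonneg h5 (sub_nonneg.2 hn1)]
end

section
/- For a random caterpillar with m ≥ 2 spine nodes, R_n/n^2 converges almost surely to a random variable with finite mean as n → ∞. -/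
open Finset Filter MeasureTheory ProbabilityTheory
open scoped ENNReal Topology

/-- Randić index with parameter α = 1: sum over edges of the product of the endpoint
degrees, i.e. `Σ_{i=2}^m D_{i-1} D_i + Σ_i X_i D_i` (each leaf has degree 1). -/
def randic {m n : ℕ} (ω : Fin n → Fin m) : ℕ :=
  (∑ i : Fin m, if h : i.val + 1 < m then degS ω i * degS ω ⟨i.val + 1, h⟩ else 0)
    + ∑ i : Fin m, leafCount ω i * degS ω i


section AuxAll

variable {m : ℕ} {μ : Measure (ℕ → Fin m)} [IsProbabilityMeasure μ]

lemma meas_cyl (n : ℕ) (h : Fin n → Fin m) :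
    MeasurableSet {ω : ℕ → Fin m | ∀ k : Fin n, ω k = h k} := by
  have : {ω : ℕ → Fin m | ∀ k : Fin n, ω k = h k}
      = ⋂ k : Fin n, (fun ω : ℕ → Fin m => ω (k : ℕ)) ⁻¹' {h k} := by
    ext ω; simp
  rw [this]
  exact MeasurableSet.iInter fun k =>
    (measurable_pi_apply _) (measurableSet_singleton _)

lemma measure_marginal (hm : 2 ≤ m)
    (hμ : ∀ (n : ℕ) (h : Fin n → Fin m),
      μ {ω | ∀ k : Fin n, ω k = h k} = ((m : ℝ≥0∞) ^ n)⁻¹)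
    (n : ℕ) (s : Finset (Fin n)) (g : Fin n → Fin m) :
    μ {ω : ℕ → Fin m | ∀ k ∈ s, ω (k : ℕ) = g k} = ((m : ℝ≥0∞) ^ s.card)⁻¹ := by
  classical
  have hm0 : (m : ℝ≥0∞) ≠ 0 := by
    simp only [ne_eq, Nat.cast_eq_zero]; omega
  have hmtop : (m : ℝ≥0∞) ≠ ⊤ := ENNReal.natCast_ne_top m
  set H : Finset (Fin n → Fin m) :=
    Fintype.piFinset (fun k => if k ∈ s then {g k} else Finset.univ) with hH
  have hset : {ω : ℕ → Fin m | ∀ k ∈ s, ω (k : ℕ) = g k}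
      = ⋃ h ∈ H, {ω : ℕ → Fin m | ∀ k : Fin n, ω (k : ℕ) = h k} := by
    ext ω
    simp only [Set.mem_setOf_eq, Set.mem_iUnion]
    constructor
    · intro hw
      refine ⟨fun k => ω (k : ℕ), ?_, fun k => rfl⟩
      rw [hH, Fintype.mem_piFinset]
      intro k
      by_cases hk : k ∈ s
      · simp [hk, hw k hk]
      · simp [hk]
    · rintro ⟨h, hhH, hwh⟩ k hk
      rw [hwh k]
      rw [hH, Fintype.mem_piFinset] at hhH
      have := hhH k
      simpa [hk] using this
  have hdisj : (↑H : Set (Fin n → Fin m)).PairwiseDisjoint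
      (fun h => {ω : ℕ → Fin m | ∀ k : Fin n, ω (k : ℕ) = h k}) := by
    intro h1 _ h2 _ hne
    refine Set.disjoint_left.2 fun ω hw1 hw2 => hne ?_
    exact funext fun k => (hw1 k).symm.trans (hw2 k)
  have hcard : H.card = m ^ (n - s.card) := by
    rw [hH, Fintype.card_piFinset]
    simp only [apply_ite Finset.card, Finset.card_singleton, Finset.card_univ,
      Fintype.card_fin]
    rw [Finset.prod_ite, Finset.prod_const_one, Finset.prod_const, one_mul]
    congr 1
    have : Finset.univ.filter (fun k => ¬ k ∈ s) = sᶜ := by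
      ext k; simp
    rw [this, Finset.card_compl, Fintype.card_fin]
  have hsc : s.card ≤ n := by
    have := Finset.card_le_univ s
    simpa using this
  rw [hset, measure_biUnion_finset hdisj (fun h _ => meas_cyl n h)]
  rw [Finset.sum_congr rfl (fun h _ => hμ n h), Finset.sum_const, hcard,
    nsmul_eq_mul]
  push_cast
  have hpow : (m : ℝ≥0∞) ^ n = (m : ℝ≥0∞) ^ s.card * (m : ℝ≥0∞) ^ (n - s.card) := by
    rw [← pow_add, Nat.add_sub_cancel' hsc]
  rw [hpow,
    ENNReal.mul_inv (Or.inl (pow_ne_zero _ hm0)) (Or.inl (ENNReal.pow_ne_top hmtop)),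
    mul_comm ((m : ℝ≥0∞) ^ s.card)⁻¹ _, ← mul_assoc,
    ENNReal.mul_inv_cancel (pow_ne_zero _ hm0) (ENNReal.pow_ne_top hmtop), one_mul]


variable (hm : 2 ≤ m)
  (hμ : ∀ (n : ℕ) (h : Fin n → Fin m),
      μ {ω | ∀ k : Fin n, ω k = h k} = ((m : ℝ≥0∞) ^ n)⁻¹)

include hm hμ
set_option linter.unusedSectionVars false

lemma measure_single (j : ℕ) (a : Fin m) :
    μ ((fun ω : ℕ → Fin m => ω j) ⁻¹' {a}) = (m : ℝ≥0∞)⁻¹ := by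
  have hj : j < j + 1 := Nat.lt_succ_self j
  have key := measure_marginal hm hμ (j + 1) {⟨j, hj⟩} (fun _ => a)
  have hset : ((fun ω : ℕ → Fin m => ω j) ⁻¹' {a})
      = {ω : ℕ → Fin m | ∀ k ∈ ({⟨j, hj⟩} : Finset (Fin (j + 1))),
          ω (k : ℕ) = (fun _ => a) k} := by
    ext ω; simp
  rw [hset, key]
  simp

lemma measure_pair (j k : ℕ) (hjk : j ≠ k) (a b : Fin m) :
    μ ((fun ω : ℕ → Fin m => (ω j, ω k)) ⁻¹' {(a, b)}) = ((m : ℝ≥0∞) ^ 2)⁻¹ := by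
  have hj : j < max j k + 1 := Nat.lt_succ_of_le (le_max_left _ _)
  have hk : k < max j k + 1 := Nat.lt_succ_of_le (le_max_right _ _)
  set n := max j k + 1
  set s : Finset (Fin n) := {⟨j, hj⟩, ⟨k, hk⟩} with hs
  set g : Fin n → Fin m := fun t => if (t : ℕ) = j then a else b with hg
  have key := measure_marginal hm hμ n s g
  have hcard : s.card = 2 := by
    rw [hs, Finset.card_insert_of_notMem (by simp [Fin.ext_iff, hjk]),
      Finset.card_singleton]
  have hset : ((fun ω : ℕ → Fin m => (ω j, ω k)) ⁻¹' {(a, b)})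
      = {ω : ℕ → Fin m | ∀ t ∈ s, ω (t : ℕ) = g t} := by
    ext ω
    simp only [Set.mem_preimage, Set.mem_singleton_iff, Prod.ext_iff,
      Set.mem_setOf_eq, hs, Finset.mem_insert, Finset.mem_singleton]
    constructor
    · rintro ⟨h1, h2⟩ t ht
      rcases ht with ht | ht <;> subst ht <;> simp [hg, hjk, Ne.symm hjk, h1, h2]
    · intro h
      have h1 := h ⟨j, hj⟩ (Or.inl rfl)
      have h2 := h ⟨k, hk⟩ (Or.inr rfl)
      simp [hg, Ne.symm hjk] at h1 h2
      exact ⟨h1, h2⟩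
  rw [hset, key, hcard]

lemma coord_indep (j k : ℕ) (hjk : j ≠ k) :
    IndepFun (fun ω : ℕ → Fin m => ω j) (fun ω : ℕ → Fin m => ω k) μ := by
  have hm0 : (m : ℝ≥0∞) ≠ 0 := by simp only [ne_eq, Nat.cast_eq_zero]; omega
  have hmtop : (m : ℝ≥0∞) ≠ ⊤ := ENNReal.natCast_ne_top m
  haveI := Measure.isProbabilityMeasure_map (μ := μ) (measurable_pi_apply k).aemeasurable
  rw [indepFun_iff_map_prod_eq_prod_map_map (measurable_pi_apply j).aemeasurable
    (measurable_pi_apply k).aemeasurable]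
  apply MeasureTheory.Measure.ext_of_singleton
  rintro ⟨a, b⟩
  rw [Measure.map_apply ((measurable_pi_apply j).prodMk (measurable_pi_apply k))
    (measurableSet_singleton _), measure_pair hm hμ j k hjk a b,
    ← Set.singleton_prod_singleton, Measure.prod_prod,
    Measure.map_apply (measurable_pi_apply j) (measurableSet_singleton _),
    Measure.map_apply (measurable_pi_apply k) (measurableSet_singleton _),
    measure_single hm hμ, measure_single hm hμ, sq,
    ENNReal.mul_inv (Or.inl hm0) (Or.inl hmtop)]

lemma coord_map (j : ℕ) :
    Measure.map (fun ω : ℕ → Fin m => ω j) μ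
      = Measure.map (fun ω : ℕ → Fin m => ω 0) μ := by
  apply MeasureTheory.Measure.ext_of_singleton
  intro a
  rw [Measure.map_apply (measurable_pi_apply j) (measurableSet_singleton _),
    Measure.map_apply (measurable_pi_apply 0) (measurableSet_singleton _),
    measure_single hm hμ, measure_single hm hμ]


/-- SLLN for the leaf-count of spine node `i`. -/
lemma leafCount_slln (i : Fin m) :
    ∀ᵐ ω ∂μ, Tendsto
      (fun n : ℕ => (leafCount (fun k : Fin n => ω (k : ℕ)) i : ℝ) / n)
      atTop (𝓝 ((m : ℝ)⁻¹)) := by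
  classical
  set f : Fin m → ℝ := fun x => if x = i then 1 else 0 with hf
  have hfm : Measurable f := measurable_of_countable f
  set X : ℕ → (ℕ → Fin m) → ℝ := fun k => f ∘ (fun ω => ω k) with hX
  have hs : MeasurableSet ((fun ω : ℕ → Fin m => ω 0) ⁻¹' {i}) :=
    (measurable_pi_apply 0) (measurableSet_singleton i)
  have hXind : X 0 = Set.indicator ((fun ω : ℕ → Fin m => ω 0) ⁻¹' {i})
      (1 : (ℕ → Fin m) → ℝ) := by
    funext ω
    by_cases h : ω 0 = i <;> simp [hX, hf, h, Set.indicator]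
  have hint : Integrable (X 0) μ := by
    rw [hXind]
    exact (integrable_const (1 : ℝ)).indicator hs
  have hindep : Pairwise (Function.onFun (IndepFun · · μ) X) := fun j k hjk =>
    (coord_indep hm hμ j k hjk).comp hfm hfm
  have hident : ∀ k, IdentDistrib (X k) (X 0) μ μ := fun k =>
    (IdentDistrib.comp ⟨(measurable_pi_apply k).aemeasurable,
      (measurable_pi_apply 0).aemeasurable, coord_map hm hμ k⟩ hfm)
  have hexp : μ[X 0] = (m : ℝ)⁻¹ := by
    rw [hXind, integral_indicator_one hs, measureReal_def, measure_single hm hμ 0 i]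
    simp [ENNReal.toReal_inv]
  have hae := strong_law_ae_real X hint hindep hident
  rw [hexp] at hae
  filter_upwards [hae] with ω hω
  have hfun : ∀ n : ℕ,
      (leafCount (fun k : Fin n => ω (k : ℕ)) i : ℝ) = ∑ k ∈ range n, X k ω := by
    intro n
    rw [leafCount, Finset.card_filter]
    push_cast
    rw [← Fin.sum_univ_eq_sum_range (fun k => X k ω) n]
    apply Finset.sum_congr rfl
    intro j _
    by_cases h : ω (j : ℕ) = i <;> simp [hX, hf, h]
  refine hω.congr fun n => ?_
  rw [hfun n]

/-- Deterministic limit computation. -/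
lemma randic_limit (ω : ℕ → Fin m)
    (H : ∀ i : Fin m, Tendsto
      (fun n : ℕ => (leafCount (fun k : Fin n => ω (k : ℕ)) i : ℝ) / n)
      atTop (𝓝 ((m : ℝ)⁻¹))) :
    Tendsto (fun n : ℕ => (randic (fun k : Fin n => ω (k : ℕ)) : ℝ) / (n : ℝ) ^ 2)
      atTop (𝓝 ((∑ i : Fin m, if i.val + 1 < m then (m : ℝ)⁻¹ * (m : ℝ)⁻¹ else 0)
        + ∑ _i : Fin m, (m : ℝ)⁻¹ * (m : ℝ)⁻¹)) := by
  have hdeg : ∀ i : Fin m, Tendsto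
      (fun n : ℕ => (degS (fun k : Fin n => ω (k : ℕ)) i : ℝ) / n)
      atTop (𝓝 ((m : ℝ)⁻¹)) := by
    intro i
    have hc : ∀ n : ℕ, (degS (fun k : Fin n => ω (k : ℕ)) i : ℝ) / n
        = (leafCount (fun k : Fin n => ω (k : ℕ)) i : ℝ) / n
          + ((if i.val = 0 ∨ i.val = m - 1 then (1 : ℝ) else 2)) / n := by
      intro n
      rw [degS, ← add_div]
      congr 1
      push_cast
      split_ifs <;> norm_num
    have := (H i).add
      (tendsto_const_div_atTop_nhds_zero_nat
        (if i.val = 0 ∨ i.val = m - 1 then (1 : ℝ) else 2))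
    rw [add_zero] at this
    exact this.congr fun n => (hc n).symm
  have key : ∀ n : ℕ, (randic (fun k : Fin n => ω (k : ℕ)) : ℝ) / (n : ℝ) ^ 2
      = (∑ i : Fin m, if h : i.val + 1 < m then
          ((degS (fun k : Fin n => ω (k : ℕ)) i : ℝ) / n)
            * ((degS (fun k : Fin n => ω (k : ℕ)) ⟨i.val + 1, h⟩ : ℝ) / n) else 0)
        + ∑ i : Fin m, ((leafCount (fun k : Fin n => ω (k : ℕ)) i : ℝ) / n)
            * ((degS (fun k : Fin n => ω (k : ℕ)) i : ℝ) / n) := by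
    intro n
    rw [randic]
    push_cast
    rw [add_div, Finset.sum_div, Finset.sum_div]
    congr 1
    · apply Finset.sum_congr rfl
      intro i _
      by_cases h : i.val + 1 < m
      · rw [dif_pos h, dif_pos h]
        push_cast
        rw [div_mul_div_comm, ← sq]
      · rw [dif_neg h, dif_neg h]
        norm_num
    · apply Finset.sum_congr rfl
      intro i _
      rw [div_mul_div_comm, ← sq]
  have t1 : Tendsto (fun n : ℕ => ∑ i : Fin m, if h : i.val + 1 < m then
      ((degS (fun k : Fin n => ω (k : ℕ)) i : ℝ) / n)
        * ((degS (fun k : Fin n => ω (k : ℕ)) ⟨i.val + 1, h⟩ : ℝ) / n) else 0)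
      atTop (𝓝 (∑ i : Fin m, if i.val + 1 < m then (m : ℝ)⁻¹ * (m : ℝ)⁻¹ else 0)) := by
    apply tendsto_finset_sum
    intro i _
    by_cases h : i.val + 1 < m
    · simp only [dif_pos h, if_pos h]
      exact (hdeg i).mul (hdeg ⟨i.val + 1, h⟩)
    · simp only [dif_neg h, if_neg h]
      exact tendsto_const_nhds
  have t2 : Tendsto (fun n : ℕ => ∑ i : Fin m,
      ((leafCount (fun k : Fin n => ω (k : ℕ)) i : ℝ) / n)
        * ((degS (fun k : Fin n => ω (k : ℕ)) i : ℝ) / n))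
      atTop (𝓝 (∑ _i : Fin m, (m : ℝ)⁻¹ * (m : ℝ)⁻¹)) := by
    apply tendsto_finset_sum
    intro i _
    exact (H i).mul (hdeg i)
  exact (t1.add t2).congr fun n => (key n).symm


end AuxAll

/-- Almost-sure convergence of `R_n / n²`: on the space of infinite attachment sequences
with any probability measure making the coordinates i.i.d. uniform on the `m` spine nodes
(characterized by the cylinder probabilities), `R_n/n²` converges almost surely to a
random variable with finite mean. -/
theorem randic_as_convergence (m : ℕ) (hm : 2 ≤ m)
    (μ : Measure (ℕ → Fin m)) [IsProbabilityMeasure μ]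
    (hμ : ∀ (n : ℕ) (h : Fin n → Fin m),
      μ {ω | ∀ k : Fin n, ω k = h k} = ((m : ℝ≥0∞) ^ n)⁻¹) :
    ∃ Rlim : (ℕ → Fin m) → ℝ,
      Integrable Rlim μ ∧
        ∀ᵐ ω ∂μ, Tendsto (fun n : ℕ => (randic (fun k : Fin n => ω k.val) : ℝ) / (n : ℝ) ^ 2)
          atTop (nhds (Rlim ω)) := by
  classical
  refine ⟨fun _ => (∑ i : Fin m, if i.val + 1 < m then (m : ℝ)⁻¹ * (m : ℝ)⁻¹ else 0)
      + ∑ _i : Fin m, (m : ℝ)⁻¹ * (m : ℝ)⁻¹, integrable_const _, ?_⟩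
  have hall : ∀ᵐ ω ∂μ, ∀ i : Fin m, Tendsto
      (fun n : ℕ => (leafCount (fun k : Fin n => ω (k : ℕ)) i : ℝ) / n)
      atTop (nhds ((m : ℝ)⁻¹)) :=
    (MeasureTheory.ae_all_iff).2 fun i => leafCount_slln hm hμ i
  filter_upwards [hall] with ω hω
  exact randic_limit hm hμ ω hω
end
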